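/- arXiv:2209.04162 — 8 statements merged into one kernel-verified Lean document; each statement's English description precedes it below -/
import Mathlib

section
/- Let r ≥ 1 be a natural number and let ϑ_0, ϑ_1, …, ϑ_r be nonnegative real numbers with ϑ_0 + ϑ_1 + ⋯ + ϑ_r = π/2. Then the product ∏_{i=0}^{r} cos(ϑ_i) is at most (cos(π/(2(r+1))))^{r+1}, and equality holds when ϑ_i = π/(2(r+1)) for every i. -/
/-!
On `[-π/2, π/2]` the cosine is nonnegative and concave, so AM-GM followed by Jensen gives
`∏ cos ϑᵢ ≤ ((∑ cos ϑᵢ) / n) ^ n ≤ cos ((∑ ϑᵢ) / n) ^ n`. Angles that are nonnegative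
and sum to `π/2` lie in that interval.
-/

open Real Finset Set

theorem Real.prod_le_arith_mean_pow {ι : Type*} [Fintype ι] [Nonempty ι] (z : ι → ℝ)
    (hz : ∀ i, 0 ≤ z i) : ∏ i, z i ≤ ((∑ i, z i) / Fintype.card ι) ^ Fintype.card ι := by
  have hn : Fintype.card ι ≠ 0 := Fintype.card_ne_zero
  have amgm := geom_mean_le_arith_mean univ (fun _ ↦ 1) z (fun _ _ ↦ zero_le_one)
    (by simp [Fintype.card_pos]) (fun i _ ↦ hz i)
  simp only [rpow_one, one_mul, sum_const, card_univ, nsmul_eq_mul, mul_one] at amgm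
  calc ∏ i, z i = ((∏ i, z i) ^ ((Fintype.card ι : ℝ)⁻¹)) ^ Fintype.card ι :=
        (rpow_inv_natCast_pow (prod_nonneg fun i _ ↦ hz i) hn).symm
    _ ≤ _ := pow_le_pow_left₀ (rpow_nonneg (prod_nonneg fun i _ ↦ hz i) _) amgm _

theorem Real.prod_cos_le_cos_mean_pow {ι : Type*} [Fintype ι] [Nonempty ι] (ϑ : ι → ℝ)
    (hϑ : ∀ i, ϑ i ∈ Icc (-(π / 2)) (π / 2)) :
    ∏ i, cos (ϑ i) ≤ cos ((∑ i, ϑ i) / Fintype.card ι) ^ Fintype.card ι := by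
  set n : ℝ := (Fintype.card ι : ℝ)
  have hn : 0 < n := Nat.cast_pos.mpr Fintype.card_pos
  have jensen := strictConcaveOn_cos_Icc.concaveOn.le_map_sum (t := univ) (w := fun _ ↦ n⁻¹)
    (fun _ _ ↦ inv_nonneg.mpr hn.le) (by simp [n, hn.ne']) (fun i _ ↦ hϑ i)
  simp only [smul_eq_mul] at jensen
  rw [← mul_sum, ← mul_sum, ← div_eq_inv_mul, ← div_eq_inv_mul] at jensen
  have hcos : ∀ i, 0 ≤ cos (ϑ i) := fun i ↦ cos_nonneg_of_mem_Icc (hϑ i)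
  calc ∏ i, cos (ϑ i) ≤ ((∑ i, cos (ϑ i)) / n) ^ Fintype.card ι := prod_le_arith_mean_pow _ hcos
    _ ≤ cos ((∑ i, ϑ i) / n) ^ Fintype.card ι :=
      pow_le_pow_left₀ (div_nonneg (sum_nonneg fun i _ ↦ hcos i) hn.le) jensen _

theorem stmt_0_general (r : ℕ) (ϑ : Fin (r + 1) → ℝ)
    (hnonneg : ∀ i, 0 ≤ ϑ i) (hsum : ∑ i, ϑ i = π / 2) :
    (∏ i, Real.cos (ϑ i)) ≤ (Real.cos (π / (2 * (r + 1)))) ^ (r + 1) ∧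
    ((∀ i, ϑ i = π / (2 * (r + 1))) →
      (∏ i, Real.cos (ϑ i)) = (Real.cos (π / (2 * (r + 1)))) ^ (r + 1)) := by
  refine ⟨?_, fun h ↦ by simp only [h, prod_const, card_univ, Fintype.card_fin]⟩
  have hϑ : ∀ i, ϑ i ∈ Icc (-(π / 2)) (π / 2) := fun i ↦
    ⟨by linarith [hnonneg i, pi_pos], hsum ▸ single_le_sum (fun j _ ↦ hnonneg j) (mem_univ i)⟩
  convert prod_cos_le_cos_mean_pow ϑ hϑ using 3 <;> simp [hsum, div_div, mul_comm]

theorem stmt_0 (r : ℕ) (hr : 1 ≤ r) (ϑ : Fin (r + 1) → ℝ)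
    (hnonneg : ∀ i, 0 ≤ ϑ i) (hsum : ∑ i, ϑ i = π / 2) :
    (∏ i, Real.cos (ϑ i)) ≤ (Real.cos (π / (2 * (r + 1)))) ^ (r + 1) ∧
    ((∀ i, ϑ i = π / (2 * (r + 1))) →
      (∏ i, Real.cos (ϑ i)) = (Real.cos (π / (2 * (r + 1)))) ^ (r + 1)) :=
  stmt_0_general r ϑ hnonneg hsum
end

section
/- For every real number y with 0 ≤ y ≤ 1, cos(y)·ln(cos(y)) + y·sin(y) ≥ 0. -/
/-! Since `x - 1 ≤ x log x` for `x ≥ 0`, it suffices that `cos y - 1 + y sin y ≥ 0`, which follows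
from `cos y ≥ 1 - y²/2` and `sin y ≥ y - y³/6`: together they give `y²/2 - y⁴/6 ≥ 0`. -/

open Real

lemma Real.cos_sub_one_add_mul_sin_nonneg {y : ℝ} (h0 : 0 ≤ y) (hy : y ^ 2 ≤ 3) :
    0 ≤ cos y - 1 + y * sin y := by
  have hcos : 1 - y ^ 2 / 2 ≤ cos y := one_sub_sq_div_two_le_cos
  have hsin : y * (y - y ^ 3 / 6) ≤ y * sin y := mul_le_mul_of_nonneg_left (sin_ge_sub_cube h0) h0
  nlinarith [mul_nonneg (sq_nonneg y) (sub_nonneg.2 hy)]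

lemma Real.cos_mul_log_cos_add_mul_sin_nonneg {y : ℝ} (h0 : 0 ≤ y) (hy : y ^ 2 ≤ 2) :
    0 ≤ cos y * log (cos y) + y * sin y := by
  have hcos : 0 ≤ cos y := le_trans (by linarith) one_sub_sq_div_two_le_cos
  calc 0 ≤ cos y - 1 + y * sin y := cos_sub_one_add_mul_sin_nonneg h0 (by linarith)
    _ ≤ cos y * log (cos y) + y * sin y := by linarith [self_sub_one_le_mul_log hcos]

theorem stmt_1 (y : ℝ) (h0 : 0 ≤ y) (h1 : y ≤ 1) :
    Real.cos y * Real.log (Real.cos y) + y * Real.sin y ≥ 0 :=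
  cos_mul_log_cos_add_mul_sin_nonneg h0 (by nlinarith)
end

section
/- For all real numbers r₁, r₂ with 2 ≤ r₁ ≤ r₂, one has (cos(π/(2r₁)))^{r₁} ≤ (cos(π/(2r₂)))^{r₂}, where powers with real exponents are taken of the positive base cos(π/(2r)) ∈ (0,1). In other words, the function f(r) = (cos(π/(2r)))^{r} is monotone nondecreasing on [2, ∞). -/
/-!
Writing `θ = π / (2r)`, we have `r · log cos θ = (π / 2) · (log cos θ / θ)`, and `θ` decreases as
`r` grows. Since `log ∘ cos` is concave on `(-π/2, π/2)` and vanishes at `0`, the secant slope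
`log cos θ / θ` through the origin is antitone in `θ`, so `r · log cos (π / (2r))` is monotone.
-/

open Real Set

theorem concaveOn_log_cos : ConcaveOn ℝ (Ioo (-(π / 2)) (π / 2)) (fun x ↦ log (cos x)) := by
  have hcos : ConcaveOn ℝ (Ioo (-(π / 2)) (π / 2)) cos :=
    strictConcaveOn_cos_Icc.concaveOn.subset Ioo_subset_Icc_self (convex_Ioo _ _)
  have himage : cos '' Ioo (-(π / 2)) (π / 2) ⊆ Ioi 0 := by
    rintro _ ⟨x, hx, rfl⟩
    exact cos_pos_of_mem_Ioo hx
  have hconvex : Convex ℝ (cos '' Ioo (-(π / 2)) (π / 2)) :=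
    ((isPreconnected_Ioo.image _ continuousOn_cos).ordConnected).convex
  exact (strictConcaveOn_log_Ioi.concaveOn.subset himage hconvex).comp hcos
    (strictMonoOn_log.monotoneOn.mono himage)

theorem Ioo_zero_pi_div_two_subset : Ioo 0 (π / 2) ⊆ Ioo (-(π / 2)) (π / 2) :=
  Ioo_subset_Ioo_left (by linarith [pi_pos])

theorem antitoneOn_log_cos_div : AntitoneOn (fun θ ↦ log (cos θ) / θ) (Ioo 0 (π / 2)) := by
  intro x hx y hy hxy
  have h0 : (0 : ℝ) ∈ Ioo (-(π / 2)) (π / 2) := ⟨by linarith [pi_pos], by linarith [pi_pos]⟩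
  have key := concaveOn_log_cos.neg.secant_mono h0 (Ioo_zero_pi_div_two_subset hx)
    (Ioo_zero_pi_div_two_subset hy) hx.1.ne' hy.1.ne' hxy
  simp only [Pi.neg_apply, cos_zero, log_one, neg_zero, sub_zero, neg_div] at key
  exact neg_le_neg_iff.mp key

theorem pi_div_two_mul_mem_Ioo_of_one_lt {r : ℝ} (hr : 1 < r) : π / (2 * r) ∈ Ioo 0 (π / 2) := by
  refine ⟨by positivity, ?_⟩
  rw [div_lt_div_iff_of_pos_left pi_pos (by linarith) two_pos]
  linarith

theorem stmt_3 (r₁ r₂ : ℝ) (h2 : 2 ≤ r₁) (h12 : r₁ ≤ r₂) :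
    (Real.cos (π / (2 * r₁))) ^ r₁ ≤ (Real.cos (π / (2 * r₂))) ^ r₂ := by
  have hθ₁ := pi_div_two_mul_mem_Ioo_of_one_lt (r := r₁) (by linarith)
  have hθ₂ := pi_div_two_mul_mem_Ioo_of_one_lt (r := r₂) (by linarith)
  have hθ : π / (2 * r₂) ≤ π / (2 * r₁) := by gcongr
  have hslope := antitoneOn_log_cos_div hθ₂ hθ₁ hθ
  rw [rpow_def_of_pos (cos_pos_of_mem_Ioo (Ioo_zero_pi_div_two_subset hθ₁)),
    rpow_def_of_pos (cos_pos_of_mem_Ioo (Ioo_zero_pi_div_two_subset hθ₂)), exp_le_exp]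
  have hr₁ : 0 < r₁ := by linarith
  have hr₂ : 0 < r₂ := by linarith
  calc log (cos (π / (2 * r₁))) * r₁ = π / 2 * (log (cos (π / (2 * r₁))) / (π / (2 * r₁))) := by
        field_simp
    _ ≤ π / 2 * (log (cos (π / (2 * r₂))) / (π / (2 * r₂))) := by gcongr
    _ = log (cos (π / (2 * r₂))) * r₂ := by field_simp
end

section
/- For every natural number r ≥ 11, (cos(π/(2(r+1))))^{2(r+1)} ≥ 4/5. -/
open Real

lemma aux_pow_bound (n : ℕ) (hn : 2 ≤ n) (t : ℝ) (ht : 0 ≤ t) (hnt : (n : ℝ) * t ≤ 1) :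
    1 - (n : ℝ) * t + ((n : ℝ) * t) ^ 2 / 4 ≤ (1 - t) ^ n := by
  induction n, hn using Nat.le_induction with
  | base =>
    push_cast
    ring_nf
    nlinarith [sq_nonneg t]
  | succ n hn ih =>
    have hn1 : (0:ℝ) ≤ (n:ℝ) := by positivity
    have hcast : ((n:ℝ)+1) * t ≤ 1 := by push_cast at hnt ⊢; linarith
    have hnt' : (n : ℝ) * t ≤ 1 := by nlinarith
    have ht1 : t ≤ 1 := by nlinarith
    have ih' := ih hnt'
    have key : (1 - t) ^ (n + 1) = (1 - t) ^ n * (1 - t) := by ring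
    rw [key]
    have h2 : (1 - (n : ℝ) * t + ((n : ℝ) * t) ^ 2 / 4) * (1 - t) ≤ (1 - t) ^ n * (1 - t) :=
      mul_le_mul_of_nonneg_right ih' (by linarith)
    refine le_trans ?_ h2
    push_cast
    have hn2 : (2:ℝ) ≤ (n:ℝ) := by exact_mod_cast hn
    -- need n^2 * t ≤ 2n - 1
    have hkey : (n:ℝ)^2 * t ≤ 2 * n - 1 := by
      nlinarith [mul_nonneg (sub_nonneg.mpr hcast) hn1, mul_nonneg ht hn1]
    nlinarith [mul_nonneg (mul_nonneg ht ht) (sub_nonneg.mpr hkey)]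

theorem stmt_5 (r : ℕ) (hr : 11 ≤ r) :
    (Real.cos (π / (2 * (r + 1)))) ^ (2 * (r + 1)) ≥ 4 / 5 := by
  set x : ℝ := π / (2 * (r + 1)) with hxdef
  have hr12 : (12:ℝ) ≤ (r:ℝ) + 1 := by
    have : (11:ℝ) ≤ (r:ℝ) := by exact_mod_cast hr
    linarith
  have hπpos := Real.pi_pos
  have hπlt : π ≤ 3.15 := Real.pi_lt_d2.le
  have hden : (0:ℝ) < 2 * ((r:ℝ) + 1) := by linarith
  have hxpos : 0 < x := div_pos hπpos hden
  have hx2 : x ^ 2 = π ^ 2 / (4 * ((r:ℝ)+1)^2) := by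
    rw [hxdef]; field_simp; ring
  set t : ℝ := x ^ 2 / 2 with htdef
  have ht0 : 0 ≤ t := by positivity
  have hcos : 1 - t ≤ Real.cos x := by
    rw [htdef]; exact Real.one_sub_sq_div_two_le_cos
  have hs : (↑(2 * (r + 1)) : ℝ) * t = π ^ 2 / (4 * ((r:ℝ)+1)) := by
    rw [htdef, hx2]
    push_cast
    field_simp
  set s : ℝ := π ^ 2 / (4 * ((r:ℝ)+1)) with hsdef
  have hsub : s ≤ 9.9225 / 48 := by
    rw [hsdef]
    rw [div_le_div_iff₀ (by linarith) (by norm_num)]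
    nlinarith
  have hs0 : 0 ≤ s := by positivity
  have hs1 : s ≤ 1 := by linarith
  have ht1 : 1 - t ≥ 0 := by
    have : t ≤ s := by
      rw [← hs]; push_cast; nlinarith
    linarith
  have hpow : (1 - t) ^ (2 * (r + 1)) ≤ (Real.cos x) ^ (2 * (r + 1)) :=
    pow_le_pow_left₀ ht1 hcos _
  have haux := aux_pow_bound (2 * (r + 1)) (by omega) t ht0 (by rw [hs]; exact hs1)
  rw [hs] at haux
  have hnum : (4:ℝ)/5 ≤ 1 - s + s ^ 2 / 4 := by
    nlinarith [sq_nonneg s, mul_nonneg hs0 (sub_nonneg.mpr hsub)]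
  calc (4:ℝ)/5 ≤ 1 - s + s ^ 2 / 4 := hnum
    _ ≤ (1 - t) ^ (2 * (r + 1)) := haux
    _ ≤ (Real.cos x) ^ (2 * (r + 1)) := hpow
end

section
/- Let H be a real inner product space, let u and g be orthonormal vectors in H, let a, b be real numbers with 0 ≤ a ≤ b ≤ π/2 and b > 0, and let v ∈ H be orthogonal to cos(b)·u + sin(b)·g. Then ⟨v, cos(a)·u + sin(a)·g⟩ = (sin(b − a)/sin(b))·⟨v, u⟩, and in particular |⟨v, cos(a)·u + sin(a)·g⟩| ≤ |⟨v, u⟩|. -/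
open Real
open scoped RealInnerProductSpace

theorem stmt_7 {H : Type*} [NormedAddCommGroup H] [InnerProductSpace ℝ H]
    (u g v : H) (hu : ‖u‖ = 1) (hg : ‖g‖ = 1) (hug : ⟪u, g⟫ = 0)
    (a b : ℝ) (ha : 0 ≤ a) (hab : a ≤ b) (hb : b ≤ π / 2) (hbpos : 0 < b)
    (hv : ⟪v, Real.cos b • u + Real.sin b • g⟫ = 0) :
    ⟪v, Real.cos a • u + Real.sin a • g⟫ = (Real.sin (b - a) / Real.sin b) * ⟪v, u⟫ ∧
    |⟪v, Real.cos a • u + Real.sin a • g⟫| ≤ |⟪v, u⟫| := by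
  have hsb : 0 < Real.sin b := Real.sin_pos_of_pos_of_lt_pi hbpos
    (lt_of_le_of_lt hb (by linarith [Real.pi_pos]))
  have hv' : Real.cos b * ⟪v, u⟫ + Real.sin b * ⟪v, g⟫ = 0 := by
    simpa [inner_add_right, real_inner_smul_right] using hv
  have hvg : ⟪v, g⟫ = -(Real.cos b * ⟪v, u⟫) / Real.sin b := by
    field_simp
    linarith
  have key : ⟪v, Real.cos a • u + Real.sin a • g⟫
      = (Real.sin (b - a) / Real.sin b) * ⟪v, u⟫ := by
    rw [inner_add_right, real_inner_smul_right, real_inner_smul_right, hvg,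
      Real.sin_sub]
    field_simp
    ring
  refine ⟨key, ?_⟩
  rw [key, abs_mul]
  have h1 : |Real.sin (b - a) / Real.sin b| ≤ 1 := by
    rw [abs_div, abs_of_pos hsb, div_le_one hsb]
    rw [abs_of_nonneg (Real.sin_nonneg_of_nonneg_of_le_pi (by linarith)
      (by linarith [Real.pi_pos]))]
    exact Real.sin_le_sin_of_le_of_le_pi_div_two (by linarith) hb (by linarith)
  calc |Real.sin (b - a) / Real.sin b| * |⟪v, u⟫|
      ≤ 1 * |⟪v, u⟫| := mul_le_mul_of_nonneg_right h1 (abs_nonneg _)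
    _ = |⟪v, u⟫| := one_mul _
end

section
/- Let m ≥ 1, let φ_1, …, φ_m be real numbers with 0 < φ_k ≤ π for each k, let a_1, …, a_m be nonnegative reals, and let N ≥ 1 be a natural number. Then ∑_{k=1}^{m} a_k · |(1/N)∑_{l=0}^{N−1} e^{i φ_k l}|² ≤ (π²/(2N²)) · ∑_{k=1}^{m} a_k/(1 − cos(φ_k)). -/
/-!
Writing `z = exp (i φ)`, the inner sum is the geometric sum `(z ^ N - 1) / (z - 1)`, whose
numerator has norm at most `2` while `‖z - 1‖ ^ 2 = 2 (1 - cos φ)`. Hence each averaged sum has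
squared norm at most `2 / (N ^ 2 (1 - cos φ))`, and `2 ≤ π ^ 2 / 2` gives the bound termwise.
-/

open Real Complex

lemma norm_geom_sum_le_of_norm_eq_one {K : Type*} [NormedDivisionRing K] {z : K}
    (hz : ‖z‖ = 1) (hz1 : z ≠ 1) (N : ℕ) :
    ‖∑ l ∈ Finset.range N, z ^ l‖ ≤ 2 / ‖z - 1‖ := by
  rw [geom_sum_eq hz1, norm_div]
  gcongr
  calc ‖z ^ N - 1‖ ≤ ‖z ^ N‖ + ‖(1 : K)‖ := norm_sub_le _ _
    _ = 2 := by rw [norm_pow, hz, one_pow, norm_one]; norm_num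

lemma Complex.sq_norm_exp_I_mul_ofReal_sub_one (x : ℝ) :
    ‖exp (I * x) - 1‖ ^ 2 = 2 * (1 - Real.cos x) := by
  have hcos : 0 ≤ (1 - Real.cos x) / 2 := by linarith [Real.cos_le_one x]
  rw [norm_exp_I_mul_ofReal_sub_one, norm_mul, Real.norm_eq_abs, Real.norm_eq_abs, abs_sin_half,
    mul_pow, Real.sq_sqrt hcos]
  norm_num
  ring

lemma Real.cos_lt_one_of_pos_of_le_pi {x : ℝ} (hx0 : 0 < x) (hxπ : x ≤ π) : Real.cos x < 1 := by
  simpa using Real.cos_lt_cos_of_nonneg_of_le_pi le_rfl hxπ hx0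

lemma sq_norm_avg_exp_I_mul_le (x : ℝ) (hx : Real.cos x < 1) (N : ℕ) :
    ‖(1 / (N : ℂ)) * ∑ l ∈ Finset.range N, exp (I * x * l)‖ ^ 2 ≤
      2 / N ^ 2 / (1 - Real.cos x) := by
  set z : ℂ := exp (I * x)
  have hdist : ‖z - 1‖ ^ 2 = 2 * (1 - Real.cos x) := sq_norm_exp_I_mul_ofReal_sub_one x
  have hz1 : z ≠ 1 := by
    rintro hz
    rw [hz, sub_self, norm_zero] at hdist
    linarith
  have hpow : ∀ l : ℕ, exp (I * x * l) = z ^ l := fun l => by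
    rw [← Complex.exp_nat_mul, mul_comm]
  have hsum : ‖∑ l ∈ Finset.range N, z ^ l‖ ^ 2 ≤ 4 / (2 * (1 - Real.cos x)) := by
    rw [← hdist, show (4 : ℝ) = 2 ^ 2 by norm_num, ← div_pow]
    gcongr
    exact norm_geom_sum_le_of_norm_eq_one (by simp [z, norm_exp_I_mul_ofReal]) hz1 N
  simp only [hpow, norm_mul, mul_pow, one_div, norm_inv, Complex.norm_natCast]
  calc ((N : ℝ)⁻¹) ^ 2 * ‖∑ l ∈ Finset.range N, z ^ l‖ ^ 2
      ≤ ((N : ℝ)⁻¹) ^ 2 * (4 / (2 * (1 - Real.cos x))) := by gcongr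
    _ = 2 / N ^ 2 / (1 - Real.cos x) := by
      field_simp
      ring

theorem stmt_9_general (m : ℕ) (φ : Fin m → ℝ) (a : Fin m → ℝ)
    (hφpos : ∀ k, 0 < φ k) (hφle : ∀ k, φ k ≤ π) (ha : ∀ k, 0 ≤ a k)
    (N : ℕ) :
    ∑ k, a k *
        ‖(1 / (N : ℂ)) * ∑ l ∈ Finset.range N,
          Complex.exp (Complex.I * (φ k) * l)‖ ^ 2 ≤
      (π ^ 2 / (2 * N ^ 2)) * ∑ k, a k / (1 - Real.cos (φ k)) := by
  rw [Finset.mul_sum]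
  refine Finset.sum_le_sum fun k _ => ?_
  have hcos := Real.cos_lt_one_of_pos_of_le_pi (hφpos k) (hφle k)
  have hπ : (2 : ℝ) ≤ π ^ 2 / 2 := by nlinarith [Real.pi_gt_three]
  calc a k * ‖(1 / (N : ℂ)) * ∑ l ∈ Finset.range N, exp (I * (φ k) * l)‖ ^ 2
      ≤ a k * (2 / N ^ 2 / (1 - Real.cos (φ k))) :=
        mul_le_mul_of_nonneg_left (sq_norm_avg_exp_I_mul_le _ hcos N) (ha k)
    _ = 2 / N ^ 2 * (a k / (1 - Real.cos (φ k))) := by ring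
    _ ≤ π ^ 2 / 2 / N ^ 2 * (a k / (1 - Real.cos (φ k))) := by
        have := ha k
        gcongr
    _ = π ^ 2 / (2 * N ^ 2) * (a k / (1 - Real.cos (φ k))) := by ring

theorem stmt_9 (m : ℕ) (hm : 1 ≤ m) (φ : Fin m → ℝ) (a : Fin m → ℝ)
    (hφpos : ∀ k, 0 < φ k) (hφle : ∀ k, φ k ≤ π) (ha : ∀ k, 0 ≤ a k)
    (N : ℕ) (hN : 1 ≤ N) :
    ∑ k, a k *
        ‖(1 / (N : ℂ)) * ∑ l ∈ Finset.range N,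
          Complex.exp (Complex.I * (φ k) * l)‖ ^ 2 ≤
      (π ^ 2 / (2 * N ^ 2)) * ∑ k, a k / (1 - Real.cos (φ k)) :=
  stmt_9_general m φ a hφpos hφle ha N
end

section
/- Let V be a finite set, P a row-stochastic matrix indexed by V, π a probability vector on V satisfying detailed balance π_x P_{xy} = π_y P_{yx} for all x, y, and M ⊆ V. Define the absorbing chain P' by P'_{xy} = P_{xy} when x ∉ M, P'_{xx} = 1 when x ∈ M, and P'_{xy} = 0 when x ∈ M and y ≠ x; define π'_x = π_x for x ∈ M and π'_x = 0 otherwise. Then for every s ∈ [0,1], the interpolated matrix P(s) = (1−s)·P + s·P' is row-stochastic and satisfies detailed balance with respect to the (unnormalized) measure (1−s)·π + s·π', i.e. ((1−s)π_x + sπ'_x)·P(s)_{xy} = ((1−s)π_y + sπ'_y)·P(s)_{yx} for all x, y ∈ V. -/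
theorem stmt_11 {V : Type*} [Fintype V] [DecidableEq V]
    (P : V → V → ℝ) (hPnonneg : ∀ x y, 0 ≤ P x y) (hProw : ∀ x, ∑ y, P x y = 1)
    (p : V → ℝ) (hpnonneg : ∀ x, 0 ≤ p x) (hpsum : ∑ x, p x = 1)
    (hrev : ∀ x y, p x * P x y = p y * P y x)
    (M : Set V) [DecidablePred (· ∈ M)]
    (P' : V → V → ℝ)
    (hP' : ∀ x y, P' x y = if x ∈ M then (if y = x then 1 else 0) else P x y)
    (p' : V → ℝ) (hp' : ∀ x, p' x = if x ∈ M then p x else 0)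
    (s : ℝ) (hs : s ∈ Set.Icc (0 : ℝ) 1)
    (Ps : V → V → ℝ) (hPs : ∀ x y, Ps x y = (1 - s) * P x y + s * P' x y) :
    (∀ x y, 0 ≤ Ps x y) ∧ (∀ x, ∑ y, Ps x y = 1) ∧
    (∀ x y, ((1 - s) * p x + s * p' x) * Ps x y = ((1 - s) * p y + s * p' y) * Ps y x) := by
  obtain ⟨hs0, hs1⟩ := hs
  have h1s : 0 ≤ 1 - s := by linarith
  refine ⟨?_, ?_, ?_⟩
  · intro x y
    have h' : 0 ≤ P' x y := by
      rw [hP']; split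
      · split <;> norm_num
      · exact hPnonneg x y
    rw [hPs]
    have := hPnonneg x y
    positivity
  · intro x
    have hrow' : ∑ y, P' x y = 1 := by
      by_cases hx : x ∈ M
      · simp only [hP', hx, if_true]
        rw [Finset.sum_ite_eq' Finset.univ x (fun _ => (1:ℝ))]
        simp
      · simp only [hP', hx, if_false]; exact hProw x
    simp only [hPs]
    rw [Finset.sum_add_distrib, ← Finset.mul_sum, ← Finset.mul_sum, hProw, hrow']
    ring
  · intro x y
    by_cases hxy : x = y
    · subst hxy; rfl
    simp only [hPs, hP', hp']
    by_cases hx : x ∈ M <;> by_cases hy : y ∈ M <;>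
      simp only [hx, hy, if_true, if_false, if_neg hxy, if_neg (Ne.symm hxy)] <;>
      nlinarith [hrev x y]
end

section
/- Let V be a finite nonempty set, P a row-stochastic matrix indexed by V, and π a probability vector on V satisfying detailed balance π_x P_{xy} = π_y P_{yx} for all x, y. Work in the Hilbert space ℂ^V ⊗ ℂ^V with standard basis vectors e_x ⊗ e_y, and fix a basis state 0̄ ∈ V. Let 𝒱 be any unitary operator on ℂ^V ⊗ ℂ^V satisfying 𝒱(e_x ⊗ e_{0̄}) = e_x ⊗ ∑_{y∈V} √(P_{xy}) e_y for every x ∈ V, let S be the swap operator S(e_x ⊗ e_y) = e_y ⊗ e_x, and let R_{0̄} = I ⊗ (2·|e_{0̄}⟩⟨e_{0̄}| − I). Then the walk operator W = 𝒱† · S · 𝒱 · R_{0̄} fixes the state |π⟩⊗e_{0̄}, where |π⟩ = ∑_{x∈V} √(π_x)·e_x; that is, W(|π⟩ ⊗ e_{0̄}) = |π⟩ ⊗ e_{0̄}. -/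
open scoped ComplexOrder

theorem stmt_12 {V : Type*} [Fintype V] [Nonempty V] [DecidableEq V]
    (P : V → V → ℝ) (hPnonneg : ∀ x y, 0 ≤ P x y) (hProw : ∀ x, ∑ y, P x y = 1)
    (p : V → ℝ) (hpnonneg : ∀ x, 0 ≤ p x) (hpsum : ∑ x, p x = 1)
    (hrev : ∀ x y, p x * P x y = p y * P y x)
    (z0 : V)
    (𝒱 : EuclideanSpace ℂ (V × V) →L[ℂ] EuclideanSpace ℂ (V × V))
    (h𝒱unitary : 𝒱 ∈ unitary (EuclideanSpace ℂ (V × V) →L[ℂ] EuclideanSpace ℂ (V × V)))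
    (h𝒱 : ∀ x : V, 𝒱 (EuclideanSpace.single (x, z0) (1 : ℂ)) =
      ∑ y : V, (Real.sqrt (P x y) : ℂ) • EuclideanSpace.single (x, y) (1 : ℂ))
    (S : EuclideanSpace ℂ (V × V) →L[ℂ] EuclideanSpace ℂ (V × V))
    (hS : ∀ x y : V, S (EuclideanSpace.single (x, y) (1 : ℂ)) =
      EuclideanSpace.single (y, x) (1 : ℂ))
    (R : EuclideanSpace ℂ (V × V) →L[ℂ] EuclideanSpace ℂ (V × V))
    (hR : ∀ x y : V, R (EuclideanSpace.single (x, y) (1 : ℂ)) =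
      if y = z0 then EuclideanSpace.single (x, y) (1 : ℂ)
      else -(EuclideanSpace.single (x, y) (1 : ℂ))) :
    ((ContinuousLinearMap.adjoint 𝒱).comp (S.comp (𝒱.comp R)))
        (∑ x : V, (Real.sqrt (p x) : ℂ) • EuclideanSpace.single (x, z0) (1 : ℂ)) =
      ∑ x : V, (Real.sqrt (p x) : ℂ) • EuclideanSpace.single (x, z0) (1 : ℂ) := by
  set u : EuclideanSpace ℂ (V × V) :=
    ∑ x : V, (Real.sqrt (p x) : ℂ) • EuclideanSpace.single (x, z0) (1 : ℂ) with hu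
  have hRu : R u = u := by
    simp only [hu, map_sum, map_smul, hR, if_pos rfl]
    simp
  have hVu : 𝒱 u = ∑ x : V, ∑ y : V,
      ((Real.sqrt (p x * P x y) : ℝ) : ℂ) • EuclideanSpace.single (x, y) (1 : ℂ) := by
    simp only [hu, map_sum, map_smul, h𝒱, Finset.smul_sum]
    refine Finset.sum_congr rfl fun x _ => Finset.sum_congr rfl fun y _ => ?_
    rw [smul_smul, Real.sqrt_mul (hpnonneg x)]
    push_cast
    ring_nf
  have hSVu : S (𝒱 u) = 𝒱 u := by
    rw [hVu]
    simp only [map_sum, map_smul, hS]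
    rw [Finset.sum_comm]
    refine Finset.sum_congr rfl fun y _ => Finset.sum_congr rfl fun x _ => ?_
    rw [hrev x y]
  have key : ContinuousLinearMap.adjoint 𝒱 (𝒱 u) = u := by
    have h1 : star 𝒱 * 𝒱 = 1 := h𝒱unitary.1
    rw [ContinuousLinearMap.star_eq_adjoint] at h1
    calc ContinuousLinearMap.adjoint 𝒱 (𝒱 u)
        = (ContinuousLinearMap.adjoint 𝒱 * 𝒱) u := rfl
      _ = u := by rw [h1]; rfl
  show ContinuousLinearMap.adjoint 𝒱 (S (𝒱 (R u))) = u
  rw [hRu, hSVu, key]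
end
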